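/- Let $Q$ be an involutory quandle, $a,b,c \in Q$, and $q \geq 1$, $m \geq 0$. Assume $c \rhd a = c \rhd b$ and the relation $a^{(ac)^q} = b^{(ab)^m}$ holds. Then for all $x \in Q$, $x^{c (ac)^{2q-1}} = x^{(ba)^{2m} b}$ (the secondary relation of $R3$), and consequently $c^{(ac)^{2q}} = c$. -/

import Mathlib

/-!
Acting by an element of the form `z^w` is acting by the word `w⁻¹ z w`, and in an involutory
quandle `w⁻¹` is the reversed word. Applying this to both sides of `a^{(ac)^q} = b^{(ab)^m}`
gives `x^{(ca)^q a (ac)^q} = x^{(ba)^m b (ab)^m}`; cancelling the square `aa` on the left yields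
the secondary relation. For the consequence, `c ▷ a = c ▷ b` is fixed by the word `ba`, so
`c^{(ac)^{2q}} = (c ▷ a)^{c (ac)^{2q-1}} = (c ▷ b)^{(ba)^{2m} b} = c`.
-/

/-- An involutory quandle: `x ▷ x = x`, `(x ▷ y) ▷ y = x`, and right self-distributivity. -/
structure InvQuandle (Q : Type*) where
  act : Q → Q → Q
  idem : ∀ x, act x x = x
  invol : ∀ x y, act (act x y) y = x
  distrib : ∀ x y z, act (act x y) z = act (act x z) (act y z)

namespace InvQuandle

variable {Q : Type*}

/-- Apply a word (list of quandle elements) to `z` on the right: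
`apw R z [y₁,…,y_k] = ((z ▷ y₁) ▷ y₂) ⋯ ▷ y_k`. -/
def apw (R : InvQuandle Q) (z : Q) (w : List Q) : Q := w.foldl R.act z

/-- The word `w` repeated `n` times. -/
def wpow (w : List Q) : ℕ → List Q
  | 0 => []
  | n + 1 => w ++ wpow w n

end InvQuandle

open InvQuandle

namespace InvQuandle

variable {Q : Type*} (R : InvQuandle Q)

lemma wpow_succ (w : List Q) (n : ℕ) : wpow w (n + 1) = wpow w n ++ w := by
  induction n with
  | zero => simp [wpow]
  | succ n ih =>
    change w ++ wpow w (n + 1) = (w ++ wpow w n) ++ w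
    rw [ih, List.append_assoc]

lemma wpow_add (w : List Q) (m n : ℕ) : wpow w (m + n) = wpow w m ++ wpow w n := by
  induction m with
  | zero => simp [wpow]
  | succ m ih =>
    rw [Nat.succ_add]
    change w ++ wpow w (m + n) = (w ++ wpow w m) ++ wpow w n
    rw [ih, List.append_assoc]

lemma cons_wpow_pair (x y : Q) (n : ℕ) : x :: wpow [y, x] n = wpow [x, y] n ++ [x] := by
  induction n with
  | zero => rfl
  | succ n ih =>
    change x :: y :: x :: wpow [y, x] n = [x, y] ++ wpow [x, y] n ++ [x]
    rw [ih]
    rfl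

lemma reverse_wpow_pair (x y : Q) (n : ℕ) : (wpow [x, y] n).reverse = wpow [y, x] n := by
  induction n with
  | zero => rfl
  | succ n ih =>
    change ([x, y] ++ wpow [x, y] n).reverse = wpow [y, x] (n + 1)
    rw [List.reverse_append, ih, wpow_succ]
    rfl

lemma apw_append (z : Q) (u v : List Q) : R.apw z (u ++ v) = R.apw (R.apw z u) v :=
  List.foldl_append ..

lemma apw_append_cons_cons (z y : Q) (u v : List Q) :
    R.apw z (u ++ y :: y :: v) = R.apw z (u ++ v) := by
  rw [apw_append, apw_append]
  exact congrArg (R.apw · v) (R.invol _ y)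

lemma act_apw (x z : Q) (w : List Q) :
    R.act x (R.apw z w) = R.apw x (w.reverse ++ z :: w) := by
  induction w generalizing x z with
  | nil => rfl
  | cons y w ih =>
    change R.act x (R.apw (R.act z y) w) = _
    rw [ih, List.reverse_cons, List.append_assoc, apw_append, apw_append]
    change R.apw (R.act _ (R.act z y)) w = R.apw (R.act (R.act (R.act _ y) z) y) w
    rw [R.distrib _ z y, R.invol]

lemma act_apw_wpow (x a b : Q) (m : ℕ) :
    R.act x (R.apw b (wpow [a, b] m)) = R.apw x (wpow [b, a] (2 * m) ++ [b]) := by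
  rw [act_apw, reverse_wpow_pair, cons_wpow_pair, ← List.append_assoc, ← wpow_add, two_mul]

lemma act_apw_self_wpow (x a c : Q) (n : ℕ) :
    R.act x (R.apw a (wpow [a, c] (n + 1))) = R.apw x (c :: wpow [a, c] (2 * n + 1)) := by
  have hword : (wpow [a, c] (n + 1)).reverse ++ a :: wpow [a, c] (n + 1) =
      (wpow [c, a] n ++ [c]) ++ a :: a :: (a :: c :: wpow [a, c] n) := by
    rw [reverse_wpow_pair, wpow_succ]
    simp [wpow]
  have hword' :
      c :: wpow [a, c] (2 * n + 1) = (wpow [c, a] n ++ [c]) ++ (a :: c :: wpow [a, c] n) := by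
    rw [show 2 * n + 1 = n + (n + 1) by omega, wpow_add, ← cons_wpow_pair]
    rfl
  rw [act_apw, hword, apw_append_cons_cons, hword']

lemma apw_act_wpow_of_act_eq {a b c : Q} (h : R.act c a = R.act c b) (n : ℕ) :
    R.apw (R.act c b) (wpow [b, a] n) = R.act c b := by
  induction n with
  | zero => rfl
  | succ n ih =>
    change R.apw (R.act (R.act (R.act c b) b) a) (wpow [b, a] n) = _
    rw [R.invol, h, ih]

end InvQuandle

/-- if $c ▷ a = c ▷ b$ and $a^{(ac)^q} = b^{(ab)^m}$ (with $q ≥ 1$), then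
for all $x$, $x^{c (ac)^{2q-1}} = x^{(ba)^{2m} b}$, and consequently $c^{(ac)^{2q}} = c$. -/
theorem stmt15 {Q : Type*} (R : InvQuandle Q) (a b c : Q) (q m : ℕ) (hq : 1 ≤ q)
    (h : R.act c a = R.act c b)
    (hR3 : R.apw a (wpow [a, c] q) = R.apw b (wpow [a, b] m)) :
    (∀ x : Q, R.apw x ([c] ++ wpow [a, c] (2 * q - 1)) = R.apw x (wpow [b, a] (2 * m) ++ [b])) ∧
    R.apw c (wpow [a, c] (2 * q)) = c := by
  obtain ⟨n, rfl⟩ : ∃ n, q = n + 1 := ⟨q - 1, by omega⟩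
  rw [show 2 * (n + 1) - 1 = 2 * n + 1 by omega, show 2 * (n + 1) = 2 * n + 1 + 1 by ring]
  have secondary : ∀ x : Q,
      R.apw x (c :: wpow [a, c] (2 * n + 1)) = R.apw x (wpow [b, a] (2 * m) ++ [b]) := by
    intro x
    rw [← R.act_apw_self_wpow, hR3, R.act_apw_wpow]
  refine ⟨secondary, ?_⟩
  calc R.apw c (wpow [a, c] (2 * n + 1 + 1))
      = R.apw (R.act c a) (c :: wpow [a, c] (2 * n + 1)) := rfl
    _ = R.act (R.apw (R.act c b) (wpow [b, a] (2 * m))) b := by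
      rw [secondary, h, R.apw_append]; rfl
    _ = c := by rw [R.apw_act_wpow_of_act_eq h, R.invol]
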